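/- Let A = (Q, Σ, δ, s, F) be a DFA in which the initial state s has no incoming transitions and every state is reachable from s, and let u ∈ Q. Then inf I_u ∈ I_u if and only if inf I_u is a finite string; likewise, sup I_u ∈ I_u if and only if sup I_u is a finite string. -/
import Mathlib


/-- A (possibly left-infinite) string over alphabet `A`, indexed from the END:
`f i` is the `i`-th character from the right, and `⊥` means the position is
past the beginning of the string.  The elements of `Σ* ∪ Σ^ω` are the
well-formed (`CStr.WF`) such functions. -/
abbrev CStr (A : Type*) := ℕ → WithBot A

/-- Well-formed: once we run out of characters going leftwards, it stays so. -/
def CStr.WF {A : Type*} (f : CStr A) : Prop := ∀ i, f i = ⊥ → f (i + 1) = ⊥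

/-- The string is finite (an element of `Σ*`). -/
def CStr.Finite {A : Type*} (f : CStr A) : Prop := ∃ i, f i = ⊥

/-- Length of a finite string. -/
noncomputable def CStr.length {A : Type*} (f : CStr A) : ℕ := sInf {i | f i = ⊥}

/-- A finite string, given as a list read left-to-right, viewed as a `CStr`. -/
def CStr.ofList {A : Type*} (w : List A) : CStr A := fun i =>
  if h : i < w.length then (w.get ⟨w.length - 1 - i, by omega⟩ : WithBot A) else ⊥

/-- The co-lexicographic (strict) order on `Σ* ∪ Σ^ω`: compare the last
characters first (position `0`), a missing character (`⊥`) being smaller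
than every character of the alphabet. -/
def colexLt {A : Type*} [LinearOrder A] (f g : CStr A) : Prop :=
  ∃ i, (∀ j, j < i → f j = g j) ∧ f i < g i

/-- The non-strict co-lex order. -/
def colexLe {A : Type*} [LinearOrder A] (f g : CStr A) : Prop := colexLt f g ∨ f = g

/-- `g` is the greatest lower bound (infimum) of `S` in `(Σ* ∪ Σ^ω, ≤)`. -/
def IsColexGLB {A : Type*} [LinearOrder A] (S : Set (CStr A)) (g : CStr A) : Prop :=
  g.WF ∧ (∀ f ∈ S, colexLe g f) ∧ ∀ h, CStr.WF h → (∀ f ∈ S, colexLe h f) → colexLe h g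

/-- `g` is the least upper bound (supremum) of `S` in `(Σ* ∪ Σ^ω, ≤)`. -/
def IsColexLUB {A : Type*} [LinearOrder A] (S : Set (CStr A)) (g : CStr A) : Prop :=
  g.WF ∧ (∀ f ∈ S, colexLe f g) ∧ ∀ h, CStr.WF h → (∀ f ∈ S, colexLe f h) → colexLe g h

/-- A DFA `(Q, A, δ, start, accept)` with a partial transition function. -/
structure PDFA (A Q : Type*) where
  δ : Q → A → Option Q
  start : Q
  accept : Set Q

/-- The transition function extended to finite strings (read left-to-right). -/
def PDFA.δStar {A Q : Type*} (M : PDFA A Q) : Q → List A → Option Q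
  | q, [] => some q
  | q, a :: w => (M.δ q a).bind fun q' => M.δStar q' w

/-- `I_u`: the set of finite strings reaching `u` from the initial state. -/
def PDFA.I {A Q : Type*} (M : PDFA A Q) (u : Q) : Set (List A) :=
  {w | M.δStar M.start w = some u}

/-- The initial state has no incoming transitions. -/
def PDFA.NoIncomingStart {A Q : Type*} (M : PDFA A Q) : Prop :=
  ∀ v a, M.δ v a ≠ some M.start

/-- Every state is reachable from the initial state. -/
def PDFA.Reachable {A Q : Type*} (M : PDFA A Q) : Prop :=
  ∀ u, ∃ w : List A, M.δStar M.start w = some u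

/-- Input consistency: all transitions entering a state `u` carry the same
label `lam u`. -/
def PDFA.InputConsistent {A Q : Type*} (M : PDFA A Q) (lam : Q → A) : Prop :=
  ∀ v a u, M.δ v a = some u → lam u = a

/-- The maximum co-lex order `<_A` on the states of a DFA:
`u <_A v` iff `α < β` for every `α ∈ I_u` and every `β ∈ I_v`. -/
def PDFA.colexStateLt {A Q : Type*} [LinearOrder A] (M : PDFA A Q) (u v : Q) : Prop :=
  ∀ α ∈ M.I u, ∀ β ∈ M.I v, colexLt (CStr.ofList α) (CStr.ofList β)

set_option linter.unusedSectionVars false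

section helpers
variable {A : Type*} [LinearOrder A]

lemma colexLt_asymm {f g : CStr A} (h1 : colexLt f g) (h2 : colexLt g f) : False := by
  obtain ⟨i, hi, hlt⟩ := h1
  obtain ⟨j, hj, hlt'⟩ := h2
  rcases lt_trichotomy i j with h | rfl | h
  · rw [(hj i h).symm] at hlt; exact lt_irrefl _ hlt
  · exact lt_irrefl _ (hlt.trans hlt')
  · rw [(hi j h)] at hlt'; exact lt_irrefl _ hlt'

lemma CStr.ofList_wf (w : List A) : (CStr.ofList w).WF := by
  intro i hi
  simp only [CStr.ofList] at hi ⊢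
  split at hi
  · exact absurd hi (by simp)
  · rw [dif_neg]; omega

lemma CStr.ofList_finite (w : List A) : (CStr.ofList w).Finite :=
  ⟨w.length, by simp [CStr.ofList]⟩

lemma CStr.wf_bot_mono {f : CStr A} (hf : f.WF) {i j : ℕ} (hij : i ≤ j) (hi : f i = ⊥) :
    f j = ⊥ := by
  induction j with
  | zero => exact (Nat.le_zero.mp hij) ▸ hi
  | succ k ih =>
    rcases Nat.lt_or_ge i (k+1) with h | h
    · exact hf k (ih (by omega))
    · have : i = k + 1 := by omega
      exact this ▸ hi

lemma CStr.bot_of_length_le {f : CStr A} (hf : f.WF) (hfin : f.Finite) {j : ℕ}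
    (hj : f.length ≤ j) : f j = ⊥ :=
  CStr.wf_bot_mono hf hj (Nat.sInf_mem hfin)

lemma CStr.ne_bot_of_lt_length {f : CStr A} {j : ℕ} (hj : j < f.length) : f j ≠ ⊥ := by
  intro h
  have := Nat.sInf_le (s := {i | f i = ⊥}) h
  have : f.length ≤ j := this
  omega

end helpers

set_option linter.unusedSectionVars false

section main
variable {A : Type*} [LinearOrder A] [Fintype A]

lemma glb_mem_of_finite {S : Set (CStr A)} (hne : S.Nonempty)
    (hS : ∀ f ∈ S, CStr.WF f ∧ CStr.Finite f)
    {γ : CStr A} (hglb : IsColexGLB S γ) (hfin : γ.Finite) : γ ∈ S := by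
  by_contra hγS
  obtain ⟨hWF, hLB, hGLB⟩ := hglb
  set n := γ.length with hn
  -- first-difference data for each element of S
  have hfd : ∀ s ∈ S, ∃ i, i ≤ n ∧ (∀ j, j < i → γ j = s j) ∧ γ i < s i := by
    intro s hs
    rcases hLB s hs with hlt | heq
    · obtain ⟨i, hag, hlt⟩ := hlt
      refine ⟨i, ?_, hag, hlt⟩
      by_contra hni
      push_neg at hni
      have h1 : s n = ⊥ := (hag n hni) ▸ CStr.bot_of_length_le hWF hfin le_rfl
      have h2 : s i = ⊥ := CStr.wf_bot_mono (hS s hs).1 (le_of_lt hni) h1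
      rw [h2] at hlt
      exact absurd hlt (not_lt_bot)
    · exact absurd (heq ▸ hs) hγS
  set I : Set ℕ := {i | ∃ s ∈ S, (∀ j, j < i → γ j = s j) ∧ γ i < s i} with hI
  have hIbdd : ∀ i ∈ I, i ≤ n := by
    rintro i ⟨s, hs, hag, hlt⟩
    by_contra hni
    push_neg at hni
    have h1 : s n = ⊥ := (hag n hni) ▸ CStr.bot_of_length_le hWF hfin le_rfl
    have h2 : s i = ⊥ := CStr.wf_bot_mono (hS s hs).1 (le_of_lt hni) h1
    rw [h2] at hlt
    exact absurd hlt (not_lt_bot)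
  have hIne : I.Nonempty := by
    obtain ⟨s, hs⟩ := hne
    obtain ⟨i, _, h2, h3⟩ := hfd s hs
    exact ⟨i, s, hs, h2, h3⟩
  set i0 := sSup I with hi0def
  have hi0 : i0 ∈ I := Nat.sSup_mem hIne ⟨n, fun i hi => hIbdd i hi⟩
  have hmax : ∀ i ∈ I, i ≤ i0 := fun i hi => le_csSup ⟨n, fun i hi => hIbdd i hi⟩ hi
  have hi0n : i0 ≤ n := hIbdd i0 hi0
  set T : Set A := {a | ∃ s ∈ S, (∀ j, j < i0 → γ j = s j) ∧ γ i0 < s i0 ∧ s i0 = (a : WithBot A)} with hT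
  have hTne : T.Nonempty := by
    obtain ⟨s, hs, hag, hlt⟩ := hi0
    cases h : s i0 with
    | bot => rw [h] at hlt; exact absurd hlt not_lt_bot
    | coe a => exact ⟨a, s, hs, hag, hlt, h⟩
  obtain ⟨a0, ha0T, ha0min⟩ := Set.exists_min_image T id (Set.toFinite T) hTne
  simp only [id] at ha0min
  set g : CStr A := fun j => if j < i0 then γ j else if j = i0 then (a0 : WithBot A) else ⊥ with hg
  have hgj : ∀ j, j < i0 → g j = γ j := fun j hj => by simp [hg, hj]
  have hgi0 : g i0 = (a0 : WithBot A) := by simp [hg]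
  have hgtop : ∀ j, i0 < j → g j = ⊥ := fun j hj => by
    simp only [hg]; rw [if_neg (by omega), if_neg (by omega)]
  have hgWF : g.WF := by
    intro j hj
    have hj' : i0 < j := by
      by_contra hle
      push_neg at hle
      rcases lt_or_eq_of_le hle with h | h
      · rw [hgj j h] at hj
        exact CStr.ne_bot_of_lt_length (lt_of_lt_of_le h hi0n) hj
      · rw [h, hgi0] at hj; exact absurd hj (by simp)
    exact hgtop _ (by omega)
  have hγlti0 : γ i0 < (a0 : WithBot A) := by
    obtain ⟨s, hs, hag, hlt, heq⟩ := ha0T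
    rw [← heq]; exact hlt
  have hgLB : ∀ f ∈ S, colexLe g f := by
    intro s hs
    obtain ⟨i, hin, hag, hlt⟩ := hfd s hs
    have hii0 : i ≤ i0 := hmax i ⟨s, hs, hag, hlt⟩
    rcases lt_or_eq_of_le hii0 with hlt' | heq
    · left
      exact ⟨i, fun j hj => (hgj j (hj.trans hlt')).trans (hag j hj),
        by rw [hgj i hlt']; exact hlt⟩
    · rw [heq] at hag hlt
      cases hsi : s i0 with
      | bot => rw [hsi] at hlt; exact absurd hlt not_lt_bot
      | coe a =>
        have haT : a ∈ T := ⟨s, hs, hag, hlt, hsi⟩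
        rcases lt_or_eq_of_le (ha0min a haT) with hab | hab
        · left
          exact ⟨i0, fun j hj => (hgj j hj).trans (hag j hj),
            by rw [hgi0, hsi]; exact_mod_cast hab⟩
        · -- a0 = a : compare tails
          set D : Set ℕ := {j | g j ≠ s j} with hD
          by_cases hDne : D.Nonempty
          · left
            set j0 := sInf D with hj0def
            have hj0 : j0 ∈ D := Nat.sInf_mem hDne
            have hagree : ∀ j, j < j0 → g j = s j := by
              intro j hj
              by_contra hne'
              have hle' : j0 ≤ j := Nat.sInf_le (show j ∈ D from hne')
              omega
            have hle_eq : ∀ j, j ≤ i0 → g j = s j := by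
              intro j hj
              rcases lt_or_eq_of_le hj with h | h
              · exact (hgj j h).trans (hag j h)
              · rw [h, hgi0, hsi, hab]
            have hj0i0 : i0 < j0 := by
              by_contra hle
              push_neg at hle
              exact hj0 (hle_eq j0 hle)
            refine ⟨j0, hagree, ?_⟩
            have hj0' : g j0 ≠ s j0 := hj0
            rw [hgtop j0 hj0i0]
            rw [hgtop j0 hj0i0] at hj0'
            exact bot_lt_iff_ne_bot.mpr (fun h => hj0' h.symm)
          · right
            funext j
            rw [Set.not_nonempty_iff_eq_empty] at hDne
            by_contra hne'
            exact (Set.eq_empty_iff_forall_notMem.mp hDne j) hne'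
  have hle := hGLB g hgWF hgLB
  have hgt : colexLt γ g := ⟨i0, fun j hj => (hgj j hj).symm, by rw [hgi0]; exact hγlti0⟩
  rcases hle with hlt | heq
  · exact colexLt_asymm hlt hgt
  · rw [heq] at hgt
    obtain ⟨i, _, hi⟩ := hgt
    exact lt_irrefl _ hi

end main

section lub
variable {A : Type*} [LinearOrder A] [Fintype A]

lemma lub_mem_of_finite {S : Set (CStr A)} (hne : S.Nonempty)
    (hS : ∀ f ∈ S, CStr.WF f ∧ CStr.Finite f)
    {γ : CStr A} (hlub : IsColexLUB S γ) (hfin : γ.Finite) : γ ∈ S := by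
  by_contra hγS
  obtain ⟨hWF, hUB, hLUB⟩ := hlub
  set n := γ.length with hn
  have hfd : ∀ s ∈ S, ∃ i, i < n ∧ (∀ j, j < i → s j = γ j) ∧ s i < γ i := by
    intro s hs
    rcases hUB s hs with hlt | heq
    · obtain ⟨i, hag, hlt⟩ := hlt
      refine ⟨i, ?_, hag, hlt⟩
      by_contra hni
      push_neg at hni
      rw [CStr.bot_of_length_le hWF hfin hni] at hlt
      exact absurd hlt not_lt_bot
    · exact absurd (heq ▸ hs) hγS
  set I : Set ℕ := {i | ∃ s ∈ S, (∀ j, j < i → s j = γ j) ∧ s i < γ i} with hI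
  have hIbdd : ∀ i ∈ I, i < n := by
    rintro i ⟨s, hs, hag, hlt⟩
    by_contra hni
    push_neg at hni
    rw [CStr.bot_of_length_le hWF hfin hni] at hlt
    exact absurd hlt not_lt_bot
  have hIne : I.Nonempty := by
    obtain ⟨s, hs⟩ := hne
    obtain ⟨i, _, h2, h3⟩ := hfd s hs
    exact ⟨i, s, hs, h2, h3⟩
  set i0 := sSup I with hi0def
  have hi0 : i0 ∈ I := Nat.sSup_mem hIne ⟨n, fun i hi => le_of_lt (hIbdd i hi)⟩
  have hmax : ∀ i ∈ I, i ≤ i0 := fun i hi => le_csSup ⟨n, fun i hi => le_of_lt (hIbdd i hi)⟩ hi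
  have hi0n : i0 < n := hIbdd i0 hi0
  set T : Set (WithBot A) :=
    {x | ∃ s ∈ S, (∀ j, j < i0 → s j = γ j) ∧ s i0 < γ i0 ∧ s i0 = x} with hT
  have hTne : T.Nonempty := by
    obtain ⟨s, hs, hag, hlt⟩ := hi0
    exact ⟨s i0, s, hs, hag, hlt, rfl⟩
  haveI : Finite (WithBot A) := inferInstanceAs (Finite (Option A))
  obtain ⟨a0, ha0T, ha0max⟩ := Set.exists_max_image T id (Set.toFinite T) hTne
  simp only [id] at ha0max
  have ha0lt : a0 < γ i0 := by
    obtain ⟨s, hs, hag, hlt, heq⟩ := ha0T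
    rw [← heq]; exact hlt
  -- a conclusion helper
  have final : ∀ g : CStr A, CStr.WF g → (∀ f ∈ S, colexLe f g) → colexLt g γ → False := by
    intro g h1 h2 h3
    rcases hLUB g h1 h2 with hlt | heq
    · exact colexLt_asymm hlt h3
    · rw [heq] at h3
      obtain ⟨i, _, hi⟩ := h3
      exact lt_irrefl _ hi
  by_cases hbot : a0 = ⊥
  · -- every tying string is the truncation of γ at i0
    set g : CStr A := fun j => if j < i0 then γ j else ⊥ with hg
    have hgj : ∀ j, j < i0 → g j = γ j := fun j hj => by simp [hg, hj]
    have hgtop : ∀ j, i0 ≤ j → g j = ⊥ := fun j hj => by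
      simp only [hg]; rw [if_neg (by omega)]
    have hgWF : g.WF := by
      intro j hj
      have hj' : i0 ≤ j := by
        by_contra hle
        push_neg at hle
        rw [hgj j hle] at hj
        exact CStr.ne_bot_of_lt_length (lt_trans hle hi0n) hj
      exact hgtop _ (by omega)
    refine final g hgWF ?_ ⟨i0, fun j hj => (hgj j hj), by
      rw [hgtop i0 le_rfl]
      exact bot_lt_iff_ne_bot.mpr (CStr.ne_bot_of_lt_length hi0n)⟩
    intro s hs
    obtain ⟨i, hin, hag, hlt⟩ := hfd s hs
    have hii0 : i ≤ i0 := hmax i ⟨s, hs, hag, hlt⟩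
    rcases lt_or_eq_of_le hii0 with hlt' | heq
    · left
      exact ⟨i, fun j hj => (hag j hj).trans (hgj j (hj.trans hlt')).symm,
        by rw [hgj i hlt']; exact hlt⟩
    · rw [heq] at hag hlt
      have hsT : s i0 ∈ T := ⟨s, hs, hag, hlt, rfl⟩
      have hsbot : s i0 = ⊥ := le_bot_iff.mp (hbot ▸ ha0max _ hsT)
      right
      funext j
      rcases Nat.lt_or_ge j i0 with h | h
      · rw [hag j h, hgj j h]
      · rw [hgtop j h, CStr.wf_bot_mono (hS s hs).1 h hsbot]
  · -- a0 is a real letter; pad with the maximal letter of the alphabet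
    obtain ⟨a, ha⟩ := WithBot.ne_bot_iff_exists.mp hbot
    haveI : Nonempty A := ⟨a⟩
    set t : A := Finset.univ.max' Finset.univ_nonempty with ht
    have htmax : ∀ b : A, b ≤ t := fun b => Finset.le_max' _ b (Finset.mem_univ b)
    have htmax' : ∀ x : WithBot A, x ≤ (t : WithBot A) := by
      intro x
      cases x with
      | bot => exact bot_le
      | coe b => exact_mod_cast htmax b
    set g : CStr A := fun j => if j < i0 then γ j else if j = i0 then (a : WithBot A) else (t : WithBot A) with hg
    have hgj : ∀ j, j < i0 → g j = γ j := fun j hj => by simp [hg, hj]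
    have hgi0 : g i0 = (a : WithBot A) := by simp [hg]
    have hgtop : ∀ j, i0 < j → g j = (t : WithBot A) := fun j hj => by
      simp only [hg]; rw [if_neg (by omega), if_neg (by omega)]
    have hgne : ∀ j, g j ≠ ⊥ := by
      intro j
      rcases Nat.lt_trichotomy j i0 with h | h | h
      · rw [hgj j h]; exact CStr.ne_bot_of_lt_length (lt_trans h hi0n)
      · rw [h, hgi0]; simp
      · rw [hgtop j h]; simp
    have hgWF : g.WF := fun j hj => absurd hj (hgne j)
    refine final g hgWF ?_ ⟨i0, fun j hj => (hgj j hj), by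
      rw [hgi0, ha]; exact ha0lt⟩
    intro s hs
    obtain ⟨i, hin, hag, hlt⟩ := hfd s hs
    have hii0 : i ≤ i0 := hmax i ⟨s, hs, hag, hlt⟩
    rcases lt_or_eq_of_le hii0 with hlt' | heq
    · left
      exact ⟨i, fun j hj => (hag j hj).trans (hgj j (hj.trans hlt')).symm,
        by rw [hgj i hlt']; exact hlt⟩
    · rw [heq] at hag hlt
      have hsT : s i0 ∈ T := ⟨s, hs, hag, hlt, rfl⟩
      have hsle : s i0 ≤ (a : WithBot A) := ha ▸ ha0max _ hsT
      rcases lt_or_eq_of_le hsle with hsa | hsa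
      · left
        exact ⟨i0, fun j hj => (hag j hj).trans (hgj j hj).symm,
          by rw [hgi0]; exact hsa⟩
      · left
        set D : Set ℕ := {j | s j ≠ g j} with hD
        have hDne : D.Nonempty := by
          obtain ⟨k, hk⟩ := (hS s hs).2
          exact ⟨k, show s k ≠ g k by rw [hk]; exact fun h => (hgne k) h.symm⟩
        set j0 := sInf D with hj0def
        have hj0 : j0 ∈ D := Nat.sInf_mem hDne
        have hagree : ∀ j, j < j0 → s j = g j := by
          intro j hj
          by_contra hne'
          have hle' : j0 ≤ j := Nat.sInf_le (show j ∈ D from hne')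
          omega
        have hle_eq : ∀ j, j ≤ i0 → s j = g j := by
          intro j hj
          rcases lt_or_eq_of_le hj with h | h
          · exact (hag j h).trans (hgj j h).symm
          · rw [h, hgi0, hsa]
        have hj0i0 : i0 < j0 := by
          by_contra hle
          push_neg at hle
          exact hj0 (hle_eq j0 hle)
        refine ⟨j0, hagree, ?_⟩
        have hj0' : s j0 ≠ g j0 := hj0
        rw [hgtop j0 hj0i0]
        rw [hgtop j0 hj0i0] at hj0'
        exact lt_of_le_of_ne (htmax' _) hj0'

end lub

/-- For a state `u` of a DFA whose initial state has no
incoming transitions and all of whose states are reachable: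
`inf I_u ∈ I_u` iff `inf I_u` is a finite string, and likewise for
`sup I_u`. -/
theorem infimum_supremum_mem_iff_finite
    {A Q : Type*} [LinearOrder A] [Fintype A] [Fintype Q]
    (M : PDFA A Q) (hstart : M.NoIncomingStart) (hreach : M.Reachable)
    (u : Q) (γinf γsup : CStr A)
    (hinf : IsColexGLB (CStr.ofList '' M.I u) γinf)
    (hsup : IsColexLUB (CStr.ofList '' M.I u) γsup) :
    ((∃ w ∈ M.I u, γinf = CStr.ofList w) ↔ γinf.Finite) ∧
    ((∃ w ∈ M.I u, γsup = CStr.ofList w) ↔ γsup.Finite) := by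
  have hne : (CStr.ofList '' M.I u).Nonempty := by
    obtain ⟨w, hw⟩ := hreach u
    exact ⟨CStr.ofList w, w, hw, rfl⟩
  have hS : ∀ f ∈ CStr.ofList '' M.I u, CStr.WF f ∧ CStr.Finite f := by
    rintro f ⟨w, hw, rfl⟩
    exact ⟨CStr.ofList_wf w, CStr.ofList_finite w⟩
  constructor
  · constructor
    · rintro ⟨w, hw, rfl⟩
      exact CStr.ofList_finite w
    · intro hfin
      obtain ⟨w, hw, heq⟩ := glb_mem_of_finite hne hS hinf hfin
      exact ⟨w, hw, heq.symm⟩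
  · constructor
    · rintro ⟨w, hw, rfl⟩
      exact CStr.ofList_finite w
    · intro hfin
      obtain ⟨w, hw, heq⟩ := lub_mem_of_finite hne hS hsup hfin
      exact ⟨w, hw, heq.symm⟩
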